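/- Let M_v be a symmetric real n×n matrix, M_e an invertible real m×m matrix, F : ℝ → ℝ^{n×m} any matrix-valued function, and 𝟙 ∈ ℝᵐ the all-ones vector. Suppose v : ℝ → ℝⁿ and e : ℝ → ℝᵐ are differentiable and satisfy M_v v'(t) = −F(t)·𝟙 and M_e e'(t) = F(t)ᵀ v(t) (the semidiscrete momentum and energy conservation laws without gravity). Then the total discrete energy E(t) = ½ v(t)ᵀ M_v v(t) + 𝟙ᵀ M_e e(t) is constant in t. -/

import Mathlib

open Matrix

/-!
Along a trajectory, the symmetry of `M_v` makes the kinetic energy change at the rate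
`vᵀ M_v v' = -vᵀ F 𝟙`, while the internal energy changes at the rate `𝟙ᵀ M_e e' = 𝟙ᵀ Fᵀ v`.
These are the same scalar with opposite signs, so the total energy has zero derivative
everywhere and is therefore constant.
-/

theorem Matrix.dotProduct_mulVec_comm {R ι κ : Type*} [CommSemiring R] [Fintype ι] [Fintype κ]
    (x : ι → R) (A : Matrix ι κ R) (y : κ → R) : x ⬝ᵥ (A *ᵥ y) = y ⬝ᵥ (Aᵀ *ᵥ x) := by
  rw [dotProduct_mulVec, mulVec_transpose, dotProduct_comm]

section Deriv

variable {𝕜 ι κ : Type*} [NontriviallyNormedField 𝕜] [Fintype ι]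
  {f g : 𝕜 → ι → 𝕜} {f' g' : ι → 𝕜} {t : 𝕜}

theorem HasDerivAt.dotProduct (hf : HasDerivAt f f' t) (hg : HasDerivAt g g' t) :
    HasDerivAt (fun s => f s ⬝ᵥ g s) (f' ⬝ᵥ g t + f t ⬝ᵥ g') t := by
  have hsum := HasDerivAt.fun_sum (u := Finset.univ) fun i _ =>
    (hasDerivAt_pi.mp hf i).fun_mul (hasDerivAt_pi.mp hg i)
  rw [Finset.sum_add_distrib] at hsum
  exact hsum

theorem HasDerivAt.mulVec (A : Matrix κ ι 𝕜) (hf : HasDerivAt f f' t) :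
    HasDerivAt (fun s => A *ᵥ f s) (A *ᵥ f') t :=
  hasDerivAt_pi.mpr fun i =>
    ((hasDerivAt_const t (A i)).dotProduct hf).congr_deriv (by rw [zero_dotProduct, zero_add]; rfl)

theorem HasDerivAt.dotProduct_mulVec_self {A : Matrix ι ι 𝕜} (hA : A.IsSymm)
    (hf : HasDerivAt f f' t) :
    HasDerivAt (fun s => f s ⬝ᵥ (A *ᵥ f s)) (2 * (f t ⬝ᵥ (A *ᵥ f'))) t := by
  have hsymm : f' ⬝ᵥ (A *ᵥ f t) = f t ⬝ᵥ (A *ᵥ f') := by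
    rw [dotProduct_mulVec_comm, hA.eq]
  convert hf.dotProduct (hf.mulVec A) using 1
  rw [hsymm, two_mul]

end Deriv

theorem semidiscrete_energy_conservation_general {n m : ℕ}
    (Mv : Matrix (Fin n) (Fin n) ℝ) (Me : Matrix (Fin m) (Fin m) ℝ)
    (hMv : Mv.IsSymm)
    (F : ℝ → Matrix (Fin n) (Fin m) ℝ)
    (v dv : ℝ → Fin n → ℝ) (e de : ℝ → Fin m → ℝ)
    (hv : ∀ t, HasDerivAt v (dv t) t)
    (he : ∀ t, HasDerivAt e (de t) t)
    (hmom : ∀ t, Mv *ᵥ dv t = -(F t *ᵥ (fun _ => 1)))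
    (hen : ∀ t, Me *ᵥ de t = (F t)ᵀ *ᵥ v t) :
    ∀ s t : ℝ,
      (1/2) * (v s ⬝ᵥ (Mv *ᵥ v s)) + (fun _ => (1:ℝ)) ⬝ᵥ (Me *ᵥ e s)
      = (1/2) * (v t ⬝ᵥ (Mv *ᵥ v t)) + (fun _ => (1:ℝ)) ⬝ᵥ (Me *ᵥ e t) := by
  have hE : ∀ t, HasDerivAt
      (fun s => (1/2) * (v s ⬝ᵥ (Mv *ᵥ v s)) + (fun _ => (1:ℝ)) ⬝ᵥ (Me *ᵥ e s)) 0 t := by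
    intro t
    have hkin := ((hv t).dotProduct_mulVec_self hMv).const_mul (1/2 : ℝ)
    have hint := (hasDerivAt_const t (fun _ => (1:ℝ))).dotProduct ((he t).mulVec Me)
    refine (hkin.add hint).congr_deriv ?_
    rw [hmom, hen, ← dotProduct_mulVec_comm]
    simp only [dotProduct_neg, zero_dotProduct]
    ring
  exact is_const_of_deriv_eq_zero (fun t => (hE t).differentiableAt) (fun t => (hE t).deriv)

/-- Energy conservation for the semidiscrete Lagrangian hydrodynamics system without gravity:
if `M_v v' = −F·𝟙` and `M_e e' = Fᵀ v`, then `½ vᵀ M_v v + 𝟙ᵀ M_e e` is constant in time. -/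
theorem semidiscrete_energy_conservation {n m : ℕ}
    (Mv : Matrix (Fin n) (Fin n) ℝ) (Me : Matrix (Fin m) (Fin m) ℝ)
    (hMv : Mv.IsSymm) (hMe : IsUnit Me.det)
    (F : ℝ → Matrix (Fin n) (Fin m) ℝ)
    (v dv : ℝ → Fin n → ℝ) (e de : ℝ → Fin m → ℝ)
    (hv : ∀ t, HasDerivAt v (dv t) t)
    (he : ∀ t, HasDerivAt e (de t) t)
    (hmom : ∀ t, Mv *ᵥ dv t = -(F t *ᵥ (fun _ => 1)))
    (hen : ∀ t, Me *ᵥ de t = (F t)ᵀ *ᵥ v t) :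
    ∀ s t : ℝ,
      (1/2) * (v s ⬝ᵥ (Mv *ᵥ v s)) + (fun _ => (1:ℝ)) ⬝ᵥ (Me *ᵥ e s)
      = (1/2) * (v t ⬝ᵥ (Mv *ᵥ v t)) + (fun _ => (1:ℝ)) ⬝ᵥ (Me *ᵥ e t) :=
  semidiscrete_energy_conservation_general Mv Me hMv F v dv e de hv he hmom hen
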